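/- arXiv:1806.09880 — 2 statements merged into one kernel-verified Lean document; each statement's English description precedes it below -/
import Mathlib

section
/- Let H : W → Y be a bounded linear operator between Hilbert spaces of finite rank N, with singular value decomposition H u = Σ_{i=1}^{N} σ_i ⟨u, f_i⟩ g_i, where σ_1 ≥ σ_2 ≥ … ≥ σ_N ≥ 0 and (f_i), (g_i) are orthonormal families in W and Y respectively. Let B be the closed unit ball of W. Then for 0 ≤ n < N, the Kolmogorov n-width of H(B) satisfies d_n(H(B)) = σ_{n+1}. -/
open scoped ENNReal RealInnerProductSpace

/-- The Kolmogorov `n`-width (valued in `[0,∞]`) of a subset `K` of a real Hilbert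
space `Y`. -/
noncomputable def kolmogorovWidth {Y : Type*} [NormedAddCommGroup Y]
    [InnerProductSpace ℝ Y] (K : Set Y) (n : ℕ) : ℝ≥0∞ :=
  ⨅ (V : Submodule ℝ Y) (_ : FiniteDimensional ℝ V ∧ Module.finrank ℝ V ≤ n),
    ⨆ y ∈ K, ⨅ z ∈ (V : Set Y), edist y z

/-!
With indices starting at `0`, `σₙ` is the paper's `σ_{n+1}`. Truncating
`H u = ∑ σᵢ ⟪u, fᵢ⟫ gᵢ` after `n` terms approximates `H u` in `span {g₀, …, g_{n-1}}` up to the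
tail `∑_{i ≥ n} σᵢ ⟪u, fᵢ⟫ gᵢ`, whose norm is at most `σₙ ‖u‖` by Bessel's inequality.
Conversely, inverting `H` coefficientwise (`σᵢ ≥ σₙ > 0` for `i ≤ n`) shows that `H(B)` contains
the ball of radius `σₙ` of the `(n+1)`-dimensional space `span {g₀, …, gₙ}`. Any subspace of
dimension at most `n` is orthogonal to a nonzero vector of that space, and its multiple of norm
`σₙ` is at distance at least `σₙ` from the subspace.
-/

open Module Submodule

theorem Submodule.exists_mem_orthogonal_ne_zero_of_finrank_lt {𝕜 E : Type*} [RCLike 𝕜]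
    [NormedAddCommGroup E] [InnerProductSpace 𝕜 E] {V X : Submodule 𝕜 E}
    [FiniteDimensional 𝕜 V] [FiniteDimensional 𝕜 X] (h : finrank 𝕜 V < finrank 𝕜 X) :
    ∃ y ∈ X, y ∈ Vᗮ ∧ y ≠ 0 := by
  obtain ⟨y, hy, hy0⟩ := exists_mem_ne_zero_of_ne_bot <|
    LinearMap.ker_ne_bot_of_finrank_lt (f := V.orthogonalProjectionOnto.toLinearMap ∘ₗ X.subtype) h
  exact ⟨y, y.2, orthogonalProjectionOnto_eq_zero_iff.mp hy, by simpa using hy0⟩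

section RealInnerProductSpace

variable {Y : Type*} [NormedAddCommGroup Y] [InnerProductSpace ℝ Y]

theorem norm_le_dist_of_mem_orthogonal {V : Submodule ℝ Y} {y z : Y} (hy : y ∈ Vᗮ) (hz : z ∈ V) :
    ‖y‖ ≤ dist y z := by
  have hyz : ⟪y, z⟫ = 0 := inner_left_of_mem_orthogonal hz hy
  rw [dist_eq_norm, mul_self_le_mul_self_iff (norm_nonneg _) (norm_nonneg _),
    norm_sub_sq_eq_norm_sq_add_norm_sq_real hyz]
  exact le_add_of_nonneg_right (mul_self_nonneg _)

theorem Orthonormal.norm_sum_smul_sq {ι : Type*} {v : ι → Y} (hv : Orthonormal ℝ v)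
    (l : ι → ℝ) (s : Finset ι) : ‖∑ i ∈ s, l i • v i‖ ^ 2 = ∑ i ∈ s, l i ^ 2 := by
  rw [← real_inner_self_eq_norm_sq, hv.inner_sum]
  simp only [RCLike.conj_to_real, sq]

theorem Orthonormal.finrank_span_image {ι : Type*} {v : ι → Y} (hv : Orthonormal ℝ v)
    (s : Finset ι) : finrank ℝ (span ℝ (v '' s)) = s.card := by
  rw [Set.image_eq_range, finrank_span_eq_card (b := fun i : (s : Set ι) => v i)
    (hv.linearIndependent.comp _ Subtype.val_injective)]
  simp

theorem kolmogorovWidth_le_ofReal {K : Set Y} {n : ℕ} (V : Submodule ℝ Y) [FiniteDimensional ℝ V]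
    (hV : finrank ℝ V ≤ n) {r : ℝ} (hK : ∀ y ∈ K, ∃ z ∈ V, dist y z ≤ r) :
    kolmogorovWidth K n ≤ ENNReal.ofReal r := by
  refine iInf₂_le_of_le V ⟨inferInstance, hV⟩ (iSup₂_le fun y hy => ?_)
  obtain ⟨z, hz, hyz⟩ := hK y hy
  exact iInf₂_le_of_le z hz (by rw [edist_dist]; exact ENNReal.ofReal_le_ofReal hyz)

theorem ofReal_le_kolmogorovWidth {K : Set Y} {n : ℕ} (X : Submodule ℝ Y) [FiniteDimensional ℝ X]
    (hX : n < finrank ℝ X) {r : ℝ} (hr : 0 ≤ r) (hK : ∀ y ∈ X, ‖y‖ ≤ r → y ∈ K) :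
    ENNReal.ofReal r ≤ kolmogorovWidth K n := by
  refine le_iInf₂ fun V ⟨_, hVn⟩ => ?_
  obtain ⟨y, hyX, hyV, hy0⟩ := exists_mem_orthogonal_ne_zero_of_finrank_lt (hVn.trans_lt hX)
  set y' := (r / ‖y‖) • y
  have hy' : ‖y'‖ = r := by
    rw [norm_smul, Real.norm_of_nonneg (by positivity),
      div_mul_cancel₀ _ (norm_ne_zero_iff.mpr hy0)]
  refine le_iSup₂_of_le y' (hK y' (X.smul_mem _ hyX) hy'.le) (le_iInf₂ fun z hz => ?_)
  rw [edist_dist, ← hy']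
  exact ENNReal.ofReal_le_ofReal (norm_le_dist_of_mem_orthogonal (Vᗮ.smul_mem _ hyV) hz)

end RealInnerProductSpace

section SingularValueDecomposition

variable {W Y : Type*} [NormedAddCommGroup W] [InnerProductSpace ℝ W]
  [NormedAddCommGroup Y] [InnerProductSpace ℝ Y]
  {ι : Type*} [Fintype ι] {σ : ι → ℝ} {f : ι → W} {g : ι → Y}

theorem dist_sum_smul_inner_smul_le (hf : Orthonormal ℝ f) (hg : Orthonormal ℝ g)
    (t : Finset ι) {r : ℝ} (hr : 0 ≤ r) (hσ : ∀ i ∉ t, |σ i| ≤ r) (u : W) :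
    dist (∑ i, (σ i * ⟪u, f i⟫) • g i) (∑ i ∈ t, (σ i * ⟪u, f i⟫) • g i) ≤ r * ‖u‖ := by
  classical
  rw [dist_eq_norm, ← Finset.sum_compl_add_sum t, add_sub_cancel_right,
    ← pow_le_pow_iff_left₀ (norm_nonneg _) (by positivity) two_ne_zero]
  have hσr : ∀ i ∈ tᶜ, σ i ^ 2 ≤ r ^ 2 := fun i hi =>
    sq_le_sq.mpr ((hσ i (Finset.mem_compl.mp hi)).trans (le_abs_self r))
  have bessel : ∑ i ∈ tᶜ, ⟪u, f i⟫ ^ 2 ≤ ‖u‖ ^ 2 := by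
    simpa only [real_inner_comm, Real.norm_eq_abs, sq_abs] using hf.sum_inner_products_le u
  calc ‖∑ i ∈ tᶜ, (σ i * ⟪u, f i⟫) • g i‖ ^ 2 = ∑ i ∈ tᶜ, σ i ^ 2 * ⟪u, f i⟫ ^ 2 := by
        simp only [hg.norm_sum_smul_sq, mul_pow]
    _ ≤ ∑ i ∈ tᶜ, r ^ 2 * ⟪u, f i⟫ ^ 2 := Finset.sum_le_sum fun i hi =>
      mul_le_mul_of_nonneg_right (hσr i hi) (sq_nonneg _)
    _ = r ^ 2 * ∑ i ∈ tᶜ, ⟪u, f i⟫ ^ 2 := (Finset.mul_sum _ _ _).symm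
    _ ≤ (r * ‖u‖) ^ 2 := by rw [mul_pow]; gcongr

theorem mem_image_closedBall_of_mem_span {H : W → Y} (hf : Orthonormal ℝ f)
    (hg : Orthonormal ℝ g) (hH : ∀ u, H u = ∑ i, (σ i * ⟪u, f i⟫) • g i) {s : Set ι} {r : ℝ}
    (hr : 0 < r) (hσ : ∀ i ∈ s, r ≤ σ i) {y : Y} (hy : y ∈ span ℝ (g '' s)) (hyr : ‖y‖ ≤ r) :
    y ∈ H '' Metric.closedBall 0 1 := by
  obtain ⟨l, hls, rfl⟩ := (Finsupp.mem_span_image_iff_linearCombination ℝ).mp hy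
  rw [Finsupp.linearCombination_apply, Finsupp.sum_fintype _ _ (by simp)] at hyr ⊢
  have hσ_pos : ∀ i, l i ≠ 0 → 0 < σ i := fun i hi =>
    hr.trans_le (hσ i (hls (Finsupp.mem_support_iff.mpr hi)))
  have hσl : ∀ i, σ i * (l i / σ i) = l i := fun i => by
    by_cases hi : l i = 0
    · simp [hi]
    · exact mul_div_cancel₀ _ (hσ_pos i hi).ne'
  have hl : ∀ i, r ^ 2 * (l i / σ i) ^ 2 ≤ l i ^ 2 := fun i => by
    by_cases hi : l i = 0
    · simp [hi]
    · calc r ^ 2 * (l i / σ i) ^ 2 ≤ σ i ^ 2 * (l i / σ i) ^ 2 := by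
            gcongr; exact hσ i (hls (Finsupp.mem_support_iff.mpr hi))
        _ = l i ^ 2 := by rw [← mul_pow, hσl]
  set u := ∑ i, (l i / σ i) • f i
  refine ⟨u, ?_, ?_⟩
  · rw [mem_closedBall_zero_iff, ← pow_le_pow_iff_left₀ (norm_nonneg _) zero_le_one two_ne_zero,
      one_pow, ← mul_le_mul_iff_right₀ (pow_pos hr 2), mul_one]
    calc r ^ 2 * ‖u‖ ^ 2 = ∑ i, r ^ 2 * (l i / σ i) ^ 2 := by
          rw [hf.norm_sum_smul_sq, Finset.mul_sum]
      _ ≤ ∑ i, l i ^ 2 := Finset.sum_le_sum fun i _ => hl i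
      _ = ‖∑ i, l i • g i‖ ^ 2 := (hg.norm_sum_smul_sq _ _).symm
      _ ≤ r ^ 2 := by gcongr
  · simp only [hH, u, hf.inner_left_fintype, RCLike.conj_to_real, hσl]

end SingularValueDecomposition

theorem kolmogorovWidth_image_unitBall_eq_singularValue_general
    {W Y : Type*} [NormedAddCommGroup W] [InnerProductSpace ℝ W]
    [NormedAddCommGroup Y] [InnerProductSpace ℝ Y]
    (H : W →L[ℝ] Y) (N : ℕ) (σ : Fin N → ℝ) (f : Fin N → W) (g : Fin N → Y)
    (hσ_mono : Antitone σ) (hσ_nonneg : ∀ i, 0 ≤ σ i)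
    (hf : Orthonormal ℝ f) (hg : Orthonormal ℝ g)
    (hH : ∀ u, H u = ∑ i, (σ i * ⟪u, f i⟫) • g i)
    (n : ℕ) (hn : n < N) :
    kolmogorovWidth (H '' Metric.closedBall (0 : W) 1) n
      = ENNReal.ofReal (σ ⟨n, hn⟩) := by
  set k : Fin N := ⟨n, hn⟩
  have hfin (t : Finset (Fin N)) : FiniteDimensional ℝ (span ℝ (g '' t)) :=
    FiniteDimensional.span_of_finite ℝ (Set.toFinite _)
  apply le_antisymm
  · have := hfin (Finset.Iio k)
    refine kolmogorovWidth_le_ofReal (span ℝ (g '' ↑(Finset.Iio k)))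
      (by rw [hg.finrank_span_image, Fin.card_Iio]) ?_
    rintro _ ⟨u, hu, rfl⟩
    refine ⟨∑ i ∈ Finset.Iio k, (σ i * ⟪u, f i⟫) • g i,
      sum_mem fun i hi => smul_mem _ _ (subset_span (Set.mem_image_of_mem g hi)), ?_⟩
    have hσ_tail : ∀ i ∉ Finset.Iio k, |σ i| ≤ σ k := fun i hi => by
      rw [abs_of_nonneg (hσ_nonneg i)]
      exact hσ_mono (not_lt.mp (Finset.mem_Iio.not.mp hi))
    calc dist (H u) _ ≤ σ k * ‖u‖ := by
          rw [hH]; exact dist_sum_smul_inner_smul_le hf hg _ (hσ_nonneg k) hσ_tail u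
      _ ≤ σ k := mul_le_of_le_one_right (hσ_nonneg k) (mem_closedBall_zero_iff.mp hu)
  · rcases (hσ_nonneg k).eq_or_lt with hσ_zero | hσ_pos
    · rw [← hσ_zero, ENNReal.ofReal_zero]
      exact bot_le
    · have := hfin (Finset.Iic k)
      refine ofReal_le_kolmogorovWidth (span ℝ (g '' ↑(Finset.Iic k)))
        (by rw [hg.finrank_span_image, Fin.card_Iic]; exact n.lt_succ_self) hσ_pos.le
        fun _ hy hyr => ?_
      exact mem_image_closedBall_of_mem_span hf hg hH hσ_pos
        (fun i hi => hσ_mono (Finset.mem_Iic.mp hi)) hy hyr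

/-- If `H : W → Y` is a bounded linear finite-rank operator with SVD
`H u = Σ_{i=1}^N σ_i ⟨u, f_i⟩ g_i` (`σ` nonincreasing and nonnegative, `(f_i)`, `(g_i)`
orthonormal) and `B` is the closed unit ball of `W`, then for `0 ≤ n < N`,
`d_n(H(B)) = σ_{n+1}`. -/
theorem kolmogorovWidth_image_unitBall_eq_singularValue
    {W Y : Type*} [NormedAddCommGroup W] [InnerProductSpace ℝ W] [CompleteSpace W]
    [NormedAddCommGroup Y] [InnerProductSpace ℝ Y] [CompleteSpace Y]
    (H : W →L[ℝ] Y) (N : ℕ) (σ : Fin N → ℝ) (f : Fin N → W) (g : Fin N → Y)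
    (hσ_mono : Antitone σ) (hσ_nonneg : ∀ i, 0 ≤ σ i)
    (hf : Orthonormal ℝ f) (hg : Orthonormal ℝ g)
    (hH : ∀ u, H u = ∑ i, (σ i * ⟪u, f i⟫) • g i)
    (n : ℕ) (hn : n < N) :
    kolmogorovWidth (H '' Metric.closedBall (0 : W) 1) n
      = ENNReal.ofReal (σ ⟨n, hn⟩) :=
  kolmogorovWidth_image_unitBall_eq_singularValue_general H N σ f g hσ_mono hσ_nonneg hf hg hH n hn
end

section
/- Let T : W → Y be a compact operator between Hilbert spaces and B the closed unit ball of W. Then the Kolmogorov n-width of T(B) satisfies d_n(T(B)) = inf over n-dimensional subspaces Y_n ≤ Y of sup over nonzero x ∈ Y_n^⊥ of sqrt(⟨T T* x, x⟩)/‖x‖. -/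
/-!
The infimum of `‖y - z‖` over `z ∈ V` is `‖P_{Vᗮ} y‖`, so for each `V` the supremum on the left
is the operator norm of `P_{Vᗮ} ∘ T`. Its adjoint is `T*` restricted to `Vᗮ`, an operator with the
same norm, and since `⟪T T* x, x⟫ = ‖T* x‖²` that norm is the supremum on the right.
-/

open scoped RealInnerProductSpace InnerProduct

open Metric Set ContinuousLinearMap

theorem ContinuousLinearMap.iSup_norm_apply_div_norm_eq_opNorm {𝕜 E F : Type*}
    [NontriviallyNormedField 𝕜] [NormedAddCommGroup E] [NormedSpace 𝕜 E]
    [SeminormedAddCommGroup F] [NormedSpace 𝕜 F] (f : E →L[𝕜] F) :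
    ⨆ x : {x : E // x ≠ 0}, ‖f x‖ / ‖(x : E)‖ = ‖f‖ := by
  have hbdd : BddAbove (range fun x : {x : E // x ≠ 0} => ‖f x‖ / ‖(x : E)‖) :=
    ⟨‖f‖, forall_mem_range.2 fun x => f.ratio_le_opNorm x⟩
  refine le_antisymm (Real.iSup_le (fun x => f.ratio_le_opNorm x) (norm_nonneg f)) ?_
  refine f.opNorm_le_bound (Real.iSup_nonneg fun _ => by positivity) fun x => ?_
  rcases eq_or_ne x 0 with rfl | hx
  · simp
  · rw [← div_le_iff₀ (norm_pos_iff.2 hx)]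
    exact le_ciSup hbdd ⟨x, hx⟩

section

variable {𝕜 W Y : Type*} [RCLike 𝕜] [NormedAddCommGroup W] [InnerProductSpace 𝕜 W]
  [NormedAddCommGroup Y] [InnerProductSpace 𝕜 Y]

theorem Submodule.iSup_image_closedBall_iInf_norm_sub_eq_opNorm (T : W →L[𝕜] Y)
    (V : Submodule 𝕜 Y) [V.HasOrthogonalProjection] :
    ⨆ y : T '' closedBall (0 : W) 1, ⨅ z : V, ‖(y : Y) - (z : Y)‖ =
      ‖Vᗮ.orthogonalProjectionOnto ∘L T‖ := by
  simp_rw [← Submodule.starProjection_minimal]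
  rw [← sSup_image' (f := fun y => ‖y - V.starProjection y‖), image_image,
    ← sSup_unitClosedBall_eq_norm]
  simp [Submodule.orthogonalProjectionOnto_orthogonal]

theorem Submodule.norm_orthogonalProjectionOnto_comp_eq_norm_adjoint_comp_subtypeL
    [CompleteSpace W] [CompleteSpace Y] (T : W →L[𝕜] Y) (K : Submodule 𝕜 Y) [CompleteSpace K] :
    ‖K.orthogonalProjectionOnto ∘L T‖ = ‖T† ∘L K.subtypeL‖ := by
  rw [← LinearIsometryEquiv.norm_map adjoint, adjoint_comp, K.adjoint_orthogonalProjectionOnto]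

end

theorem Submodule.iSup_sqrt_inner_adjoint_div_norm_eq_opNorm {W Y : Type*}
    [NormedAddCommGroup W] [InnerProductSpace ℝ W] [CompleteSpace W]
    [NormedAddCommGroup Y] [InnerProductSpace ℝ Y] [CompleteSpace Y]
    (T : W →L[ℝ] Y) (K : Submodule ℝ Y) :
    ⨆ x : {x : K // (x : Y) ≠ 0}, √⟪T (adjoint T x), x⟫ / ‖(x : Y)‖ = ‖T† ∘L K.subtypeL‖ := by
  rw [← (T† ∘L K.subtypeL).iSup_norm_apply_div_norm_eq_opNorm]
  refine (Equiv.subtypeEquivRight fun _ => Submodule.coe_eq_zero.not).iSup_congr fun x => ?_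
  simp [apply_norm_eq_sqrt_inner_adjoint_left]

theorem kolmogorovWidth_eq_inf_sup_sqrt_adjoint_general
    {W Y : Type*} [NormedAddCommGroup W] [InnerProductSpace ℝ W] [CompleteSpace W]
    [NormedAddCommGroup Y] [InnerProductSpace ℝ Y] [CompleteSpace Y]
    (T : W →L[ℝ] Y) (n : ℕ) :
    (⨅ (V : Submodule ℝ Y) (_ : FiniteDimensional ℝ V ∧ Module.finrank ℝ V = n),
        ⨆ y : T '' Metric.closedBall (0 : W) 1, ⨅ z : V, ‖(y : Y) - (z : Y)‖)
      = ⨅ (V : Submodule ℝ Y) (_ : FiniteDimensional ℝ V ∧ Module.finrank ℝ V = n),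
          ⨆ x : {x : V.orthogonal // (x : Y) ≠ 0},
            Real.sqrt ⟪T (ContinuousLinearMap.adjoint T ((x : V.orthogonal) : Y)),
              ((x : V.orthogonal) : Y)⟫ / ‖((x : V.orthogonal) : Y)‖ := by
  refine iInf_congr fun V => iInf_congr fun ⟨_, _⟩ => ?_
  rw [V.iSup_image_closedBall_iInf_norm_sub_eq_opNorm,
    Vᗮ.norm_orthogonalProjectionOnto_comp_eq_norm_adjoint_comp_subtypeL,
    Vᗮ.iSup_sqrt_inner_adjoint_div_norm_eq_opNorm]

/-- For a compact operator `T : W → Y` between real Hilbert spaces and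
`B` the closed unit ball of `W`, the Kolmogorov `n`-width of `T(B)` equals the infimum
over `n`-dimensional subspaces `Y_n ≤ Y` of `sup_{0 ≠ x ∈ Y_nᗮ} sqrt ⟨T T* x, x⟩ / ‖x‖`. -/
theorem kolmogorovWidth_eq_inf_sup_sqrt_adjoint
    {W Y : Type*} [NormedAddCommGroup W] [InnerProductSpace ℝ W] [CompleteSpace W]
    [NormedAddCommGroup Y] [InnerProductSpace ℝ Y] [CompleteSpace Y]
    (T : W →L[ℝ] Y) (hT : IsCompactOperator T) (n : ℕ) :
    (⨅ (V : Submodule ℝ Y) (_ : FiniteDimensional ℝ V ∧ Module.finrank ℝ V = n),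
        ⨆ y : T '' Metric.closedBall (0 : W) 1, ⨅ z : V, ‖(y : Y) - (z : Y)‖)
      = ⨅ (V : Submodule ℝ Y) (_ : FiniteDimensional ℝ V ∧ Module.finrank ℝ V = n),
          ⨆ x : {x : V.orthogonal // (x : Y) ≠ 0},
            Real.sqrt ⟪T (ContinuousLinearMap.adjoint T ((x : V.orthogonal) : Y)),
              ((x : V.orthogonal) : Y)⟫ / ‖((x : V.orthogonal) : Y)‖ :=
  kolmogorovWidth_eq_inf_sup_sqrt_adjoint_general T n
end
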